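/- Let 0 < α < 2 and h > 0. Then the family of quadratic-interpolation weights is summable and Σ_{j∈ℤ, j≠0} w_j^Q = 2^α · Γ((α+1)/2) / (√π · Γ(2 − α/2)) · h^{−α}. -/

import Mathlib

/-!
Write `k = G''' = C t^{-1-α}`. Taylor expansion of `G` and `G'` about the centre of each stencil,
with remainders controlled by `|k|`, shows that the weights are midpoint-rule and second-difference
errors of `G`, hence `|w_n| = O(n^{-1-α})` and the series converges absolutely. Grouping
`w_{2m} + w_{2m+1}` makes it telescope:
`∑_{n=1}^{2M+1} w_n = h^{-α} (C/(2-α) - G''(1) + E(2M+1))` with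
`E(x) = G(x+2) - G(x) - (3 G'(x) + G'(x+2))/2 → 0`. Since `w_{-j} = w_j`, the total is
`2 h^{-α} (C/(2-α) + C/α)`, which `Γ(z+1) = z Γ(z)` turns into the stated constant.
-/

open Real

/-- The normalizing constant `C_{1,α}` of the one-dimensional fractional Laplacian. -/
noncomputable def Cna (α : ℝ) : ℝ :=
  α * 2 ^ (α - 1) * Real.Gamma ((α + 1) / 2) / (Real.sqrt Real.pi * Real.Gamma ((2 - α) / 2))

/-- The antiderivative `G` with `G'''(t) = C_{1,α} t^{−1−α}` for `t > 0`. -/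
noncomputable def Gfun (α t : ℝ) : ℝ :=
  if α = 1 then Cna 1 * (t - t * Real.log t)
  else Cna α * t ^ (2 - α) / ((2 - α) * (α - 1) * α)

/-- The first derivative `G'` of `Gfun` (for `t > 0`). -/
noncomputable def Gd (α t : ℝ) : ℝ :=
  if α = 1 then -(Cna 1) * Real.log t else Cna α * t ^ (1 - α) / ((α - 1) * α)

/-- The second derivative `G''` of `Gfun`: `G''(t) = −C_{1,α} t^{−α}/α` for `t > 0`
(valid in both cases `α ≠ 1` and `α = 1`). -/
noncomputable def Gd2 (α t : ℝ) : ℝ := -(Cna α) * t ^ (-α) / α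

/-- The quadratic-interpolation weights `w_j^Q` (with the irrelevant `w_0` set to `0`). -/
noncomputable def wQ (α h : ℝ) (j : ℤ) : ℝ :=
  if j = 0 then 0
  else if j.natAbs = 1 then
    h ^ (-α) * (Cna α / (2 - α) - Gd2 α 1 - (Gd α 3 + 3 * Gd α 1) / 2 + Gfun α 3 - Gfun α 1)
  else if j.natAbs % 2 = 0 then
    2 * h ^ (-α) * (Gd α ((j.natAbs : ℝ) + 1) + Gd α ((j.natAbs : ℝ) - 1)
      - Gfun α ((j.natAbs : ℝ) + 1) + Gfun α ((j.natAbs : ℝ) - 1))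
  else
    h ^ (-α) * (-(Gd α ((j.natAbs : ℝ) + 2) + 6 * Gd α (j.natAbs : ℝ) + Gd α ((j.natAbs : ℝ) - 2)) / 2
      + Gfun α ((j.natAbs : ℝ) + 2) - Gfun α ((j.natAbs : ℝ) - 2))

open Set Filter Topology

section Taylor

variable {S : Set ℝ} {φ φ' F f g k : ℝ → ℝ} {C M s t x u : ℝ}

lemma abs_sub_le_of_hasDerivAt_uIcc (hφ : ∀ τ ∈ uIcc s t, HasDerivAt φ (φ' τ) τ)
    (hbound : ∀ τ ∈ uIcc s t, |φ' τ| ≤ C) : |φ t - φ s| ≤ C * |t - s| :=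
  convex_uIcc s t |>.norm_image_sub_le_of_norm_hasDerivWithin_le
    (fun τ hτ => (hφ τ hτ).hasDerivWithinAt) hbound left_mem_uIcc right_mem_uIcc

lemma abs_sub_le_of_abs_deriv_le (hS : S.OrdConnected) (hs : s ∈ S) (ht : t ∈ S)
    (hg : ∀ τ ∈ S, HasDerivAt g (k τ) τ) (hk : ∀ τ ∈ S, |k τ| ≤ M) :
    |g t - g s| ≤ M * |t - s| :=
  abs_sub_le_of_hasDerivAt_uIcc (fun τ hτ => hg τ (hS.uIcc_subset hs ht hτ))
    (fun τ hτ => hk τ (hS.uIcc_subset hs ht hτ))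

lemma abs_taylor_one_le (hS : S.OrdConnected) (hs : s ∈ S) (ht : t ∈ S)
    (hf : ∀ τ ∈ S, HasDerivAt f (g τ) τ) (hg : ∀ τ ∈ S, HasDerivAt g (k τ) τ)
    (hk : ∀ τ ∈ S, |k τ| ≤ M) :
    |f t - f s - (t - s) * g s| ≤ M * |t - s| ^ 2 := by
  have hM : 0 ≤ M := (abs_nonneg _).trans (hk s hs)
  have hderiv : ∀ τ ∈ uIcc s t,
      HasDerivAt (fun τ => f τ - (τ - s) * g s) (g τ - g s) τ := fun τ hτ => by
    refine ((hf τ (hS.uIcc_subset hs ht hτ)).sub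
      (((hasDerivAt_id τ).sub_const s).mul_const (g s))).congr_deriv ?_
    ring
  have hbound : ∀ τ ∈ uIcc s t, |g τ - g s| ≤ M * |t - s| := fun τ hτ =>
    (abs_sub_le_of_abs_deriv_le hS hs (hS.uIcc_subset hs ht hτ) hg hk).trans
      (mul_le_mul_of_nonneg_left (abs_sub_left_of_mem_uIcc hτ) hM)
  convert abs_sub_le_of_hasDerivAt_uIcc hderiv hbound using 1
  · congr 1; ring
  · ring

lemma abs_taylor_two_le (hS : S.OrdConnected) (hs : s ∈ S) (ht : t ∈ S)
    (hF : ∀ τ ∈ S, HasDerivAt F (f τ) τ) (hf : ∀ τ ∈ S, HasDerivAt f (g τ) τ)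
    (hg : ∀ τ ∈ S, HasDerivAt g (k τ) τ) (hk : ∀ τ ∈ S, |k τ| ≤ M) :
    |F t - F s - (t - s) * f s - (t - s) ^ 2 / 2 * g s| ≤ M * |t - s| ^ 3 := by
  have hM : 0 ≤ M := (abs_nonneg _).trans (hk s hs)
  have hderiv : ∀ τ ∈ uIcc s t, HasDerivAt (fun τ => F τ - (τ - s) * f s - (τ - s) ^ 2 / 2 * g s)
      (f τ - f s - (τ - s) * g s) τ := fun τ hτ => by
    refine (((hF τ (hS.uIcc_subset hs ht hτ)).sub
      (((hasDerivAt_id τ).sub_const s).mul_const (f s))).sub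
      ((((hasDerivAt_id τ).sub_const s).pow 2).div_const 2 |>.mul_const (g s))).congr_deriv ?_
    simp only [id]; ring
  have hbound : ∀ τ ∈ uIcc s t, |f τ - f s - (τ - s) * g s| ≤ M * |t - s| ^ 2 := fun τ hτ =>
    (abs_taylor_one_le hS hs (hS.uIcc_subset hs ht hτ) hf hg hk).trans <|
      mul_le_mul_of_nonneg_left (pow_le_pow_left₀ (abs_nonneg _) (abs_sub_left_of_mem_uIcc hτ) 2) hM
  convert abs_sub_le_of_hasDerivAt_uIcc hderiv hbound using 1
  · congr 1; ring
  · ring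

lemma abs_midpoint_error_le (hS : S.OrdConnected) (hx : x ∈ S) (hxu : x + u ∈ S)
    (hxu' : x - u ∈ S) (hF : ∀ τ ∈ S, HasDerivAt F (f τ) τ) (hf : ∀ τ ∈ S, HasDerivAt f (g τ) τ)
    (hg : ∀ τ ∈ S, HasDerivAt g (k τ) τ) (hk : ∀ τ ∈ S, |k τ| ≤ M) :
    |F (x + u) - F (x - u) - 2 * u * f x| ≤ 2 * M * |u| ^ 3 := by
  have e₁ := abs_taylor_two_le hS hx hxu hF hf hg hk
  have e₂ := abs_taylor_two_le hS hx hxu' hF hf hg hk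
  simp only [add_sub_cancel_left, sub_sub_cancel_left, abs_neg] at e₁ e₂
  calc |F (x + u) - F (x - u) - 2 * u * f x|
      = |(F (x + u) - F x - u * f x - u ^ 2 / 2 * g x)
          - (F (x - u) - F x - -u * f x - (-u) ^ 2 / 2 * g x)| := by congr 1; ring
    _ ≤ M * |u| ^ 3 + M * |u| ^ 3 := (abs_sub _ _).trans (add_le_add e₁ e₂)
    _ = 2 * M * |u| ^ 3 := by ring

lemma abs_second_difference_le (hS : S.OrdConnected) (hx : x ∈ S) (hxu : x + u ∈ S)
    (hxu' : x - u ∈ S) (hf : ∀ τ ∈ S, HasDerivAt f (g τ) τ)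
    (hg : ∀ τ ∈ S, HasDerivAt g (k τ) τ) (hk : ∀ τ ∈ S, |k τ| ≤ M) :
    |f (x + u) + f (x - u) - 2 * f x| ≤ 2 * M * u ^ 2 := by
  have d₁ := abs_taylor_one_le hS hx hxu hf hg hk
  have d₂ := abs_taylor_one_le hS hx hxu' hf hg hk
  simp only [add_sub_cancel_left, sub_sub_cancel_left, abs_neg, sq_abs] at d₁ d₂
  calc |f (x + u) + f (x - u) - 2 * f x|
      = |(f (x + u) - f x - u * g x) + (f (x - u) - f x - -u * g x)| := by congr 1; ring
    _ ≤ M * u ^ 2 + M * u ^ 2 := (abs_add_le _ _).trans (add_le_add d₁ d₂)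
    _ = 2 * M * u ^ 2 := by ring

end Taylor

lemma Cna_pos {α : ℝ} (hα0 : 0 < α) (hα2 : α < 2) : 0 < Cna α := by
  have := Real.Gamma_pos_of_pos (by linarith : 0 < (α + 1) / 2)
  have := Real.Gamma_pos_of_pos (by linarith : 0 < (2 - α) / 2)
  have := Real.sqrt_pos.2 Real.pi_pos
  unfold Cna
  positivity

section Derivatives

variable {α t : ℝ}

lemma hasDerivAt_Gd2 (hα : α ≠ 0) (ht : 0 < t) :
    HasDerivAt (Gd2 α) (Cna α * t ^ (-1 - α)) t := by
  refine ((Real.hasDerivAt_rpow_const (p := -α) (Or.inl ht.ne')).const_mul (-Cna α)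
    |>.div_const α).congr_deriv ?_
  rw [show -α - 1 = -1 - α by ring]
  field_simp

lemma hasDerivAt_Gd (hα : α ≠ 0) (ht : 0 < t) : HasDerivAt (Gd α) (Gd2 α t) t := by
  rcases eq_or_ne α 1 with rfl | hα1
  · have hGd : Gd 1 = fun t => -Cna 1 * Real.log t := by ext; simp [Gd]
    rw [hGd, Gd2, Real.rpow_neg_one, div_one]
    exact (Real.hasDerivAt_log ht.ne').const_mul _
  · have hGd : Gd α = fun t => Cna α * t ^ (1 - α) / ((α - 1) * α) := by ext; simp [Gd, hα1]
    rw [hGd]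
    refine ((Real.hasDerivAt_rpow_const (p := 1 - α) (Or.inl ht.ne')).const_mul (Cna α)
      |>.div_const _).congr_deriv ?_
    rw [Gd2, show 1 - α - 1 = -α by ring]
    have : α - 1 ≠ 0 := sub_ne_zero.2 hα1
    field_simp
    ring

lemma hasDerivAt_Gfun (hα2 : α ≠ 2) (ht : 0 < t) : HasDerivAt (Gfun α) (Gd α t) t := by
  rcases eq_or_ne α 1 with rfl | hα1
  · have hG : Gfun 1 = fun t => Cna 1 * (t - t * Real.log t) := by ext; simp [Gfun]
    rw [hG]
    refine (((hasDerivAt_id t).sub ((hasDerivAt_id t).mul (Real.hasDerivAt_log ht.ne'))).const_mul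
      (Cna 1)).congr_deriv ?_
    simp only [Gd, if_true, id, one_mul, mul_inv_cancel₀ ht.ne']
    ring
  · have hG : Gfun α = fun t => Cna α * t ^ (2 - α) / ((2 - α) * (α - 1) * α) := by
      ext; simp [Gfun, hα1]
    rw [hG]
    refine ((Real.hasDerivAt_rpow_const (p := 2 - α) (Or.inl ht.ne')).const_mul (Cna α)
      |>.div_const _).congr_deriv ?_
    simp only [Gd, if_neg hα1, show 2 - α - 1 = 1 - α by ring]
    have : 2 - α ≠ 0 := sub_ne_zero.2 hα2.symm
    field_simp

end Derivatives

section Bounds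

variable {α x : ℝ}

lemma Gfun_derivatives_on_Ici (hα0 : 0 < α) (hα2 : α < 2) {a : ℝ} (ha : 0 < a) :
    (∀ t ∈ Ici a, HasDerivAt (Gfun α) (Gd α t) t) ∧ (∀ t ∈ Ici a, HasDerivAt (Gd α) (Gd2 α t) t) ∧
    (∀ t ∈ Ici a, HasDerivAt (Gd2 α) (Cna α * t ^ (-1 - α)) t) ∧
    ∀ t ∈ Ici a, |Cna α * t ^ (-1 - α)| ≤ Cna α * a ^ (-1 - α) := by
  refine ⟨fun t ht => hasDerivAt_Gfun hα2.ne (ha.trans_le ht),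
    fun t ht => hasDerivAt_Gd hα0.ne' (ha.trans_le ht),
    fun t ht => hasDerivAt_Gd2 hα0.ne' (ha.trans_le ht), fun t ht => ?_⟩
  have hC := Cna_pos hα0 hα2
  rw [abs_of_nonneg (by have := ha.trans_le ht; positivity)]
  exact mul_le_mul_of_nonneg_left (Real.rpow_le_rpow_of_nonpos ha ht (by linarith)) hC.le

lemma abs_Gfun_even_rule_le (hα0 : 0 < α) (hα2 : α < 2) (hx : 2 < x) :
    |Gd α (x + 1) + Gd α (x - 1) - Gfun α (x + 1) + Gfun α (x - 1)|
      ≤ 4 * Cna α * (x - 2) ^ (-1 - α) := by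
  obtain ⟨hF, hf, hg, hk⟩ := Gfun_derivatives_on_Ici hα0 hα2 (by linarith : 0 < x - 2)
  have hmid := abs_midpoint_error_le (x := x) (u := 1) ordConnected_Ici (mem_Ici.2 (by linarith))
    (mem_Ici.2 (by linarith)) (mem_Ici.2 (by linarith)) hF hf hg hk
  have hsd := abs_second_difference_le (x := x) (u := 1) ordConnected_Ici (mem_Ici.2 (by linarith))
    (mem_Ici.2 (by linarith)) (mem_Ici.2 (by linarith)) hf hg hk
  norm_num at hmid hsd
  rw [abs_le] at *
  constructor <;> linarith

lemma abs_Gfun_odd_rule_le (hα0 : 0 < α) (hα2 : α < 2) (hx : 2 < x) :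
    |-(Gd α (x + 2) + 6 * Gd α x + Gd α (x - 2)) / 2 + Gfun α (x + 2) - Gfun α (x - 2)|
      ≤ 20 * Cna α * (x - 2) ^ (-1 - α) := by
  obtain ⟨hF, hf, hg, hk⟩ := Gfun_derivatives_on_Ici hα0 hα2 (by linarith : 0 < x - 2)
  have hmid := abs_midpoint_error_le (x := x) (u := 2) ordConnected_Ici (mem_Ici.2 (by linarith))
    (mem_Ici.2 (by linarith)) (mem_Ici.2 le_rfl) hF hf hg hk
  have hsd := abs_second_difference_le (x := x) (u := 2) ordConnected_Ici (mem_Ici.2 (by linarith))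
    (mem_Ici.2 (by linarith)) (mem_Ici.2 le_rfl) hf hg hk
  norm_num at hmid hsd
  rw [abs_le] at *
  constructor <;> linarith

end Bounds

noncomputable def wQTail (α x : ℝ) : ℝ :=
  Gfun α (x + 2) - Gfun α x - 3 / 2 * Gd α x - 1 / 2 * Gd α (x + 2)

lemma abs_wQTail_le {α x : ℝ} (hα0 : 0 < α) (hα2 : α < 2) (hx : 0 < x) :
    |wQTail α x| ≤ 10 * Cna α * x ^ (-1 - α) + |Gd2 α x| := by
  obtain ⟨hF, hf, hg, hk⟩ := Gfun_derivatives_on_Ici hα0 hα2 hx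
  have hx₂ : x + 2 ∈ Ici x := mem_Ici.2 (by linarith)
  have e := abs_taylor_two_le ordConnected_Ici self_mem_Ici hx₂ hF hf hg hk
  have d := abs_taylor_one_le ordConnected_Ici self_mem_Ici hx₂ hf hg hk
  norm_num at e d
  unfold wQTail
  rw [abs_le] at *
  constructor <;> linarith [le_abs_self (Gd2 α x), neg_abs_le (Gd2 α x)]

lemma tendsto_wQTail {α : ℝ} (hα0 : 0 < α) (hα2 : α < 2) :
    Tendsto (wQTail α) atTop (𝓝 0) := by
  have h₁ : Tendsto (fun x : ℝ => x ^ (-1 - α)) atTop (𝓝 0) := by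
    have := tendsto_rpow_neg_atTop (y := 1 + α) (by linarith)
    rwa [neg_add'] at this
  have h₂ : Tendsto (Gd2 α) atTop (𝓝 0) := by
    have := ((tendsto_rpow_neg_atTop hα0).const_mul (-Cna α)).div_const α
    rwa [mul_zero, zero_div] at this
  have hbound := (h₁.const_mul (10 * Cna α)).add h₂.abs
  rw [mul_zero, abs_zero, add_zero] at hbound
  exact squeeze_zero_norm' ((eventually_gt_atTop 0).mono fun x hx => by
    simpa [mul_assoc] using abs_wQTail_le hα0 hα2 hx) hbound

section Weights

variable {α : ℝ}

lemma wQ_eq_rpow_mul (α h : ℝ) (j : ℤ) : wQ α h j = h ^ (-α) * wQ α 1 j := by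
  unfold wQ
  split_ifs <;> simp only [Real.one_rpow, mul_zero, one_mul]
  ring

lemma wQ_neg (α h : ℝ) (j : ℤ) : wQ α h (-j) = wQ α h j := by
  simp only [wQ, neg_eq_zero, Int.natAbs_neg]

lemma wQ_zero (α h : ℝ) : wQ α h 0 = 0 := if_pos rfl

lemma wQ_one (α : ℝ) : wQ α 1 1 = Cna α / (2 - α) - Gd2 α 1 + wQTail α 1 := by
  simp only [wQ, wQTail, one_ne_zero, Int.natAbs_one, if_true, if_false, Real.one_rpow, one_mul]
  ring_nf

lemma wQ_pair_eq_wQTail_sub (α : ℝ) (m : ℕ) :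
    wQ α 1 (2 * m + 2 : ℕ) + wQ α 1 (2 * m + 3 : ℕ)
      = wQTail α (2 * m + 3) - wQTail α (2 * m + 1) := by
  simp only [wQ, wQTail, Int.natAbs_natCast, Int.natCast_eq_zero, Real.one_rpow, one_mul]
  rw [if_neg (by omega), if_neg (by omega), if_pos (by omega), if_neg (by omega), if_neg (by omega),
    if_neg (by omega)]
  push_cast
  ring_nf

lemma sum_range_wQ (α : ℝ) (M : ℕ) :
    ∑ n ∈ Finset.range (2 * M + 2), wQ α 1 n
      = Cna α / (2 - α) - Gd2 α 1 + wQTail α (2 * M + 1) := by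
  induction M with
  | zero => simp [Finset.sum_range_succ, wQ_zero, wQ_one]
  | succ M ih =>
    rw [show 2 * (M + 1) + 2 = 2 * M + 2 + 1 + 1 by ring, Finset.sum_range_succ,
      Finset.sum_range_succ, ih, add_assoc, wQ_pair_eq_wQTail_sub]
    push_cast
    ring_nf

lemma abs_wQ_le (hα0 : 0 < α) (hα2 : α < 2) {n : ℕ} (hn : 3 ≤ n) :
    |wQ α 1 n| ≤ 20 * Cna α * ((n : ℝ) - 2) ^ (-1 - α) := by
  have hx : (2 : ℝ) < n := by exact_mod_cast hn
  have hC : 0 ≤ Cna α * ((n : ℝ) - 2) ^ (-1 - α) := by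
    have := Cna_pos hα0 hα2; have : (0 : ℝ) < n - 2 := by linarith
    positivity
  simp only [wQ, Int.natAbs_natCast, Int.natCast_eq_zero, Real.one_rpow, one_mul, mul_one]
  rw [if_neg (by omega), if_neg (by omega)]
  split_ifs
  · rw [abs_mul, abs_two]
    linarith [abs_Gfun_even_rule_le hα0 hα2 hx]
  · exact abs_Gfun_odd_rule_le hα0 hα2 hx

lemma summable_wQ_natCast (hα0 : 0 < α) (hα2 : α < 2) :
    Summable fun n : ℕ => wQ α 1 n := by
  rw [← summable_nat_add_iff 3]
  have hp : Summable fun n : ℕ => ((n + 1 : ℕ) : ℝ) ^ (-1 - α) :=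
    (summable_nat_add_iff 1).2 (Real.summable_nat_rpow.2 (by linarith))
  refine Summable.of_norm_bounded (hp.mul_left (20 * Cna α)) fun n => ?_
  have := abs_wQ_le hα0 hα2 (by omega : 3 ≤ n + 3)
  push_cast at this ⊢
  rw [Real.norm_eq_abs]
  convert this using 3
  ring

lemma hasSum_wQ_natCast (hα0 : 0 < α) (hα2 : α < 2) :
    HasSum (fun n : ℕ => wQ α 1 n) (Cna α / (2 - α) - Gd2 α 1) := by
  have hsum := (summable_wQ_natCast hα0 hα2).hasSum
  have hsub : Tendsto (fun M : ℕ => ∑ n ∈ Finset.range (2 * M + 2), wQ α 1 n) atTop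
      (𝓝 (∑' n : ℕ, wQ α 1 n)) :=
    hsum.tendsto_sum_nat.comp (tendsto_atTop_mono (fun M => show M ≤ 2 * M + 2 by omega) tendsto_id)
  have hval : Tendsto (fun M : ℕ => ∑ n ∈ Finset.range (2 * M + 2), wQ α 1 n) atTop
      (𝓝 (Cna α / (2 - α) - Gd2 α 1)) := by
    simp_rw [sum_range_wQ]
    have := (tendsto_wQTail hα0 hα2).comp (tendsto_atTop_add_const_right _ 1
      ((tendsto_natCast_atTop_atTop (R := ℝ)).const_mul_atTop two_pos))
    simpa using this.const_add (Cna α / (2 - α) - Gd2 α 1)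
  rwa [tendsto_nhds_unique hsub hval] at hsum

lemma hasSum_wQ (hα0 : 0 < α) (hα2 : α < 2) :
    HasSum (wQ α 1) (2 * (Cna α / (2 - α) - Gd2 α 1)) := by
  have hnat := hasSum_wQ_natCast hα0 hα2
  have hneg : HasSum (fun n : ℕ => wQ α 1 (-(n + 1 : ℤ))) (Cna α / (2 - α) - Gd2 α 1) := by
    simp only [wQ_neg]
    simpa [wQ_zero] using (hasSum_nat_add_iff' 1).2 hnat
  simpa [two_mul] using hnat.of_nat_of_neg_add_one hneg

end Weights

lemma two_mul_sub_Gd2_one {α : ℝ} (hα0 : 0 < α) (hα2 : α < 2) :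
    2 * (Cna α / (2 - α) - Gd2 α 1)
      = 2 ^ α * Real.Gamma ((α + 1) / 2) / (Real.sqrt Real.pi * Real.Gamma (2 - α / 2)) := by
  have hΓ : Real.Gamma (2 - α / 2) = (2 - α) / 2 * Real.Gamma ((2 - α) / 2) := by
    rw [show 2 - α / 2 = (2 - α) / 2 + 1 by ring, Real.Gamma_add_one (by linarith)]
  have h2 : (2 : ℝ) ^ (α - 1) = 2 ^ α / 2 := by
    rw [Real.rpow_sub two_pos, Real.rpow_one]
  have := Real.Gamma_pos_of_pos (by linarith : 0 < (2 - α) / 2)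
  have := Real.sqrt_pos.2 Real.pi_pos
  have : 2 - α ≠ 0 := by linarith
  rw [Gd2, Real.one_rpow, hΓ, Cna, h2]
  field_simp
  ring

theorem wQ_sum_general (α : ℝ) (hα0 : 0 < α) (hα2 : α < 2) (h : ℝ) :
    Summable (fun j : {j : ℤ // j ≠ 0} => wQ α h (j : ℤ)) ∧
    ∑' j : {j : ℤ // j ≠ 0}, wQ α h (j : ℤ)
      = 2 ^ α * Real.Gamma ((α + 1) / 2) / (Real.sqrt Real.pi * Real.Gamma (2 - α / 2)) * h ^ (-α) := by
  have hsum : HasSum (fun j : {j : ℤ // j ≠ 0} => wQ α h j)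
      (2 * (Cna α / (2 - α) - Gd2 α 1) * h ^ (-α)) := by
    refine (hasSum_subtype_iff_of_support_subset (f := wQ α h) (s := {j | j ≠ 0})
      fun j hj => ?_).2 ?_
    · rintro rfl
      exact hj (wQ_zero α h)
    · rw [funext (wQ_eq_rpow_mul α h), mul_comm]
      exact (hasSum_wQ hα0 hα2).mul_left _
  rw [two_mul_sub_Gd2_one hα0 hα2] at hsum
  exact ⟨hsum.summable, hsum.tsum_eq⟩

/-- The quadratic-interpolation weights are summable, with total sum
`Σ_{j≠0} w_j^Q = 2^α Γ((α+1)/2) / (√π Γ(2 − α/2)) · h^{−α}`. -/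
theorem wQ_sum (α : ℝ) (hα0 : 0 < α) (hα2 : α < 2) (h : ℝ) (hh : 0 < h) :
    Summable (fun j : {j : ℤ // j ≠ 0} => wQ α h (j : ℤ)) ∧
    ∑' j : {j : ℤ // j ≠ 0}, wQ α h (j : ℤ)
      = 2 ^ α * Real.Gamma ((α + 1) / 2) / (Real.sqrt Real.pi * Real.Gamma (2 - α / 2)) * h ^ (-α) :=
  wQ_sum_general α hα0 hα2 h
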